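/- arXiv:2108.00432 — 3 statements merged into one kernel-verified Lean document; each statement's English description precedes it below -/
import Mathlib

section
/- Let (ε_j)_{j∈ℕ} be a sequence with values in {0,1}. For each integer j ≥ −1 define Δ_j := min{k ∈ ℕ, k ≥ 1 : ε_{j+k} = 1}. Assume there exists an integer Δ ≥ 1 such that Δ_j ≤ Δ for all j ≥ −1 (i.e., ε_j = 1 for some j ∈ {0,…,Δ−1} and every window of Δ consecutive indices contains an index j with ε_j = 1). Then limsup_{r→∞} (1/r) · Σ_{m=0}^{r−1} Σ_{ℓ=0}^{m} Π_{j=ℓ}^{m} (1+ε_j)^{−1} ≤ (3Δ−1)/2. -/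
open Filter Finset

/-- Length of the run of consecutive indices `j ≤ m`, `j ≥ 1`, with `ε j ≠ 1`,
counted backwards from `m`. -/
private def za (ε : ℕ → ℕ) : ℕ → ℕ
  | 0 => 0
  | m + 1 => if ε (m + 1) = 1 then 0 else za ε m + 1

private lemma za_le (ε : ℕ → ℕ) : ∀ m, za ε m ≤ m
  | 0 => le_refl 0
  | m + 1 => by
      unfold za
      split
      · exact Nat.zero_le _
      · exact Nat.succ_le_succ (za_le ε m)

private lemma za_zero (ε : ℕ → ℕ) (hε : ∀ j, ε j ≤ 1) :
    ∀ m k, k < za ε m → ε (m - k) = 0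
  | 0, k, h => by simp [za] at h
  | m + 1, k, h => by
      unfold za at h
      split at h
      · omega
      · rename_i hne
        match k with
        | 0 =>
          have := hε (m + 1)
          simpa using (by omega : ε (m + 1) = 0)
        | k' + 1 =>
          have : ε (m - k') = 0 := za_zero ε hε m k' (by omega)
          simpa [Nat.succ_sub_succ] using this

private lemma za_lt (ε : ℕ → ℕ) (hε : ∀ j, ε j ≤ 1) (Δ : ℕ) (hΔ : 1 ≤ Δ)
    (hwin : ∀ n : ℕ, ∃ i < Δ, ε (n + i) = 1) (m : ℕ) : za ε m < Δ := by
  by_contra hcon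
  push_neg at hcon
  have hm : Δ ≤ m := le_trans hcon (za_le ε m)
  obtain ⟨i, hi, hone⟩ := hwin (m + 1 - Δ)
  have hz : ε (m - (Δ - 1 - i)) = 0 := za_zero ε hε m (Δ - 1 - i) (by omega)
  have heq : m + 1 - Δ + i = m - (Δ - 1 - i) := by omega
  rw [heq] at hone
  omega

private lemma za_H (ε : ℕ → ℕ) (hε : ∀ j, ε j ≤ 1) (Δ : ℕ) (hΔ : 1 ≤ Δ)
    (hwin : ∀ n : ℕ, ∃ i < Δ, ε (n + i) = 1) :
    ∀ r : ℕ, 2 * ∑ m ∈ range r, za ε m + r + Δ * za ε r ≤ (za ε r) ^ 2 + Δ * r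
  | 0 => by simp [za]
  | r + 1 => by
      have IH := za_H ε hε Δ hΔ hwin r
      have ha : za ε r + 1 ≤ Δ := za_lt ε hε Δ hΔ hwin r
      rw [sum_range_succ]
      show 2 * (∑ m ∈ range r, za ε m + za ε r) + (r + 1) + Δ * za ε (r + 1) ≤
        (za ε (r + 1)) ^ 2 + Δ * (r + 1)
      by_cases h : ε (r + 1) = 1
      · have hb : za ε (r + 1) = 0 := by simp [za, h]
        rw [hb]
        nlinarith [IH, ha, sq_nonneg (za ε r)]
      · have hb : za ε (r + 1) = za ε r + 1 := by simp [za, h]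
        rw [hb]
        nlinarith [IH]

private lemma za_sum (ε : ℕ → ℕ) (hε : ∀ j, ε j ≤ 1) (Δ : ℕ) (hΔ : 1 ≤ Δ)
    (hwin : ∀ n : ℕ, ∃ i < Δ, ε (n + i) = 1) (r : ℕ) :
    2 * ∑ m ∈ range r, za ε m + r ≤ Δ * r := by
  have H := za_H ε hε Δ hΔ hwin r
  have ha : za ε r + 1 ≤ Δ := za_lt ε hε Δ hΔ hwin r
  nlinarith [H, ha]

private lemma S_nonneg (ε : ℕ → ℕ) (m : ℕ) :
    0 ≤ ∑ l ∈ range (m + 1), ∏ j ∈ Icc l m, (1 + (ε j : ℝ))⁻¹ := by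
  positivity

private lemma S_rec (ε : ℕ → ℕ) (m : ℕ) :
    ∑ l ∈ range (m + 1 + 1), ∏ j ∈ Icc l (m + 1), (1 + (ε j : ℝ))⁻¹ =
      (1 + (ε (m + 1) : ℝ))⁻¹ *
        ((∑ l ∈ range (m + 1), ∏ j ∈ Icc l m, (1 + (ε j : ℝ))⁻¹) + 1) := by
  rw [sum_range_succ]
  have h1 : ∀ l ∈ range (m + 1),
      ∏ j ∈ Icc l (m + 1), (1 + (ε j : ℝ))⁻¹ =
        (∏ j ∈ Icc l m, (1 + (ε j : ℝ))⁻¹) * (1 + (ε (m + 1) : ℝ))⁻¹ := by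
    intro l hl
    rw [mem_range] at hl
    exact prod_Icc_succ_top (by omega) _
  rw [sum_congr rfl h1, ← sum_mul, Icc_self, prod_singleton]
  ring

private lemma S_le (ε : ℕ → ℕ) (hε : ∀ j, ε j ≤ 1) (Δ : ℕ) (hΔ : 1 ≤ Δ)
    (hwin : ∀ n : ℕ, ∃ i < Δ, ε (n + i) = 1) :
    ∀ m : ℕ, ∑ l ∈ range (m + 1), ∏ j ∈ Icc l m, (1 + (ε j : ℝ))⁻¹ ≤
      (Δ : ℝ) + za ε m
  | 0 => by
      have h0 : (0 : ℝ) ≤ (ε 0 : ℝ) := Nat.cast_nonneg _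
      have : (1 + (ε 0 : ℝ))⁻¹ ≤ 1 := by
        rw [inv_le_one_iff₀]
        right
        linarith
      have hz : za ε 0 = 0 := rfl
      rw [hz]
      simp only [zero_add, range_one, sum_singleton, Icc_self, prod_singleton]
      have hΔ' : (1 : ℝ) ≤ Δ := by exact_mod_cast hΔ
      push_cast
      linarith
  | m + 1 => by
      have IH := S_le ε hε Δ hΔ hwin m
      have hal : za ε m + 1 ≤ Δ := za_lt ε hε Δ hΔ hwin m
      have hal' : (za ε m : ℝ) + 1 ≤ (Δ : ℝ) := by exact_mod_cast hal
      rw [S_rec]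
      have hnn := S_nonneg ε m
      by_cases h : ε (m + 1) = 1
      · have hb : za ε (m + 1) = 0 := by simp [za, h]
        rw [hb, h]
        push_cast
        rw [show (1 : ℝ) + 1 = 2 by norm_num]
        rw [inv_mul_le_iff₀ (by norm_num : (0:ℝ) < 2)]
        linarith
      · have h0 : ε (m + 1) = 0 := by have := hε (m + 1); omega
        have hb : za ε (m + 1) = za ε m + 1 := by simp [za, h]
        rw [hb, h0]
        push_cast
        simp only [add_zero, inv_one, one_mul]
        linarith

set_option maxHeartbeats 1000000 in
/-- Proposition 3.4 (inequality part): if every window of `Δ` consecutive indices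
contains an index `j` with `ε j = 1`, then the time-normalized double sum of products
`∏ (1 + ε j)⁻¹` has limsup at most `(3Δ - 1)/2`. -/
theorem adasmooth_prop_delta_le (ε : ℕ → ℕ) (hε : ∀ j, ε j ≤ 1) (Δ : ℕ) (hΔ : 1 ≤ Δ)
    (hwin : ∀ n : ℕ, ∃ i < Δ, ε (n + i) = 1) :
    Filter.limsup
      (fun r : ℕ =>
        (1 / (r : ℝ)) *
          ∑ m ∈ Finset.range r, ∑ l ∈ Finset.range (m + 1),
            ∏ j ∈ Finset.Icc l m, (1 + (ε j : ℝ))⁻¹)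
      Filter.atTop ≤ (3 * (Δ : ℝ) - 1) / 2 := by
  set c : ℝ := (3 * (Δ : ℝ) - 1) / 2 with hc
  have hΔ' : (1 : ℝ) ≤ Δ := by exact_mod_cast hΔ
  have key : ∀ r : ℕ,
      (1 / (r : ℝ)) * ∑ m ∈ range r, ∑ l ∈ range (m + 1),
        ∏ j ∈ Icc l m, (1 + (ε j : ℝ))⁻¹ ≤ c := by
    intro r
    rcases Nat.eq_zero_or_pos r with hr | hr
    · subst hr
      simp only [Nat.cast_zero, range_zero, sum_empty, mul_zero]
      rw [hc]; linarith
    · have hsum : ∑ m ∈ range r, ∑ l ∈ range (m + 1),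
          ∏ j ∈ Icc l m, (1 + (ε j : ℝ))⁻¹ ≤ (r : ℝ) * c := by
        have h1 : ∑ m ∈ range r, ∑ l ∈ range (m + 1),
            ∏ j ∈ Icc l m, (1 + (ε j : ℝ))⁻¹ ≤
              ∑ m ∈ range r, ((Δ : ℝ) + za ε m) :=
          Finset.sum_le_sum fun m _ => S_le ε hε Δ hΔ hwin m
        have h2 : 2 * ∑ m ∈ range r, za ε m + r ≤ Δ * r :=
          za_sum ε hε Δ hΔ hwin r
        have h2' : 2 * (∑ m ∈ range r, (za ε m : ℝ)) + (r : ℝ) ≤ (Δ : ℝ) * r := by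
          exact_mod_cast h2
        have h3 : ∑ m ∈ range r, ((Δ : ℝ) + za ε m) =
            (r : ℝ) * Δ + ∑ m ∈ range r, (za ε m : ℝ) := by
          rw [Finset.sum_add_distrib, Finset.sum_const, card_range, nsmul_eq_mul]
        rw [hc]
        calc ∑ m ∈ range r, ∑ l ∈ range (m + 1),
              ∏ j ∈ Icc l m, (1 + (ε j : ℝ))⁻¹
            ≤ (r : ℝ) * Δ + ∑ m ∈ range r, (za ε m : ℝ) := by rw [← h3]; exact h1
          _ ≤ (r : ℝ) * ((3 * (Δ : ℝ) - 1) / 2) := by linarith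
      have hrpos : (0 : ℝ) < r := by exact_mod_cast hr
      calc (1 / (r : ℝ)) * ∑ m ∈ range r, ∑ l ∈ range (m + 1),
            ∏ j ∈ Icc l m, (1 + (ε j : ℝ))⁻¹
          ≤ (1 / (r : ℝ)) * ((r : ℝ) * c) := by
            apply mul_le_mul_of_nonneg_left hsum
            positivity
        _ = c := by field_simp
  have hcob : Filter.IsCoboundedUnder (· ≤ ·) Filter.atTop
      (fun r : ℕ =>
        (1 / (r : ℝ)) *
          ∑ m ∈ Finset.range r, ∑ l ∈ Finset.range (m + 1),
            ∏ j ∈ Finset.Icc l m, (1 + (ε j : ℝ))⁻¹) :=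
    Filter.isCoboundedUnder_le_of_le Filter.atTop (x := 0) fun r => by positivity
  exact Filter.limsup_le_of_le hcob (Filter.Eventually.of_forall key)
end

section
/- Let Δ ≥ 1 be an integer and let (ε_j)_{j∈ℕ} be the {0,1}-valued sequence with ε_j = 1 if and only if Δ divides j+1 (equivalently, Δ_j = Δ for all integers j ≥ −1, where Δ_j := min{k ≥ 1 : ε_{j+k} = 1}). Then the limit lim_{r→∞} (1/r) · Σ_{m=0}^{r−1} Σ_{ℓ=0}^{m} Π_{j=ℓ}^{m} (1+ε_j)^{−1} exists and equals (3Δ−1)/2. -/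
/-!
Write `S n = ∑_{l < n} ∏_{l ≤ j < n} (1 + ε j)⁻¹`, so that the inner sum of the theorem is
`S (m + 1)` and `S (n + 1) = (S n + 1) / (1 + ε n)`. Within a period `S` grows by one per step,
and at the end of each period it is halved; hence `S n = n % Δ + Δ - Δ 2^{-⌊n/Δ⌋}`. The first two
terms are `Δ`-periodic with average `(Δ - 1)/2 + Δ`, the last tends to `0`, and the Cesàro mean
of a periodic sequence plus a null sequence is the average over one period.
-/

open Filter Finset Function Topology

theorem Finset.sum_range_prod_Ico_succ {R : Type*} [CommSemiring R] (c : ℕ → R) (n : ℕ) :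
    ∑ l ∈ range (n + 1), ∏ j ∈ Ico l (n + 1), c j
      = (∑ l ∈ range n, ∏ j ∈ Ico l n, c j + 1) * c n := by
  rw [sum_range_succ, Nat.Ico_succ_singleton, prod_singleton, add_mul, one_mul, sum_mul]
  congr 1
  exact sum_congr rfl fun l hl => prod_Ico_succ_top (mem_range.1 hl).le c

theorem Nat.mod_add_one_eq_of_dvd_add_one {n Δ : ℕ} (h : Δ ∣ n + 1) : n % Δ + 1 = Δ := by
  have hn := Nat.div_add_mod n Δ
  have hn1 := Nat.mul_div_cancel' h
  rw [Nat.succ_div_of_dvd h, Nat.mul_add_one] at hn1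
  have := Nat.mod_lt n (Nat.pos_of_dvd_of_pos h n.succ_pos)
  omega

theorem Nat.add_one_mod_of_not_dvd {n Δ : ℕ} (h : ¬Δ ∣ n + 1) : (n + 1) % Δ = n % Δ + 1 := by
  have hn := Nat.div_add_mod n Δ
  have hn1 := Nat.div_add_mod (n + 1) Δ
  rw [Nat.succ_div_of_not_dvd h] at hn1
  omega

theorem sum_range_prod_Ico_inv_one_add_eq_of_periodic {Δ : ℕ} {ε : ℕ → ℕ}
    (hε : ∀ j, ε j = if Δ ∣ j + 1 then 1 else 0) (n : ℕ) :
    ∑ l ∈ range n, ∏ j ∈ Ico l n, (1 + (ε j : ℝ))⁻¹ = (n % Δ : ℕ) + Δ - Δ * 2⁻¹ ^ (n / Δ) := by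
  induction n with
  | zero => simp
  | succ n ih =>
    rw [sum_range_prod_Ico_succ, ih, hε]
    by_cases h : Δ ∣ n + 1
    · have hmod : ((n % Δ : ℕ) : ℝ) + 1 = Δ := by
        exact_mod_cast Nat.mod_add_one_eq_of_dvd_add_one h
      rw [if_pos h, Nat.succ_div_of_dvd h, Nat.mod_eq_zero_of_dvd h, pow_succ]
      push_cast
      linear_combination hmod / 2
    · rw [if_neg h, Nat.succ_div_of_not_dvd h, Nat.add_one_mod_of_not_dvd h]
      push_cast
      ring

theorem Finset.sum_range_natCast_mul_two {R : Type*} [CommRing R] (n : ℕ) :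
    (∑ i ∈ range n, (i : R)) * 2 = n * (n - 1) := by
  induction n with
  | zero => simp
  | succ n ih =>
    rw [sum_range_succ, add_mul, ih]
    push_cast
    ring

namespace Function.Periodic

theorem sum_range_comp_add {M : Type*} [AddCommMonoid M] {f : ℕ → M} {p : ℕ}
    (hf : Periodic f p) (r : ℕ) : ∑ i ∈ range p, f (r + i) = ∑ i ∈ range p, f i := by
  induction r with
  | zero => simp
  | succ r ih =>
    rcases p with _ | q
    · simp
    rw [← ih, sum_range_succ, sum_range_succ', add_zero, ← hf r]
    simp only [add_assoc, add_comm 1]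

variable {f : ℕ → ℝ} {p : ℕ}

theorem tendsto_cesaro (hp : p ≠ 0) (hf : Periodic f p) :
    Tendsto (fun r : ℕ => (r : ℝ)⁻¹ * ∑ n ∈ range r, f n) atTop
      (𝓝 ((p : ℝ)⁻¹ * ∑ i ∈ range p, f i)) := by
  set a := (p : ℝ)⁻¹ * ∑ i ∈ range p, f i
  set g : ℕ → ℝ := fun r => ∑ n ∈ range r, f n - r * a
  have hg : Periodic g p := fun r => by
    simp only [g, a, sum_range_add, hf.sum_range_comp_add, Nat.cast_add]
    field_simp
    ring
  have hg_le : ∀ r, ‖g r‖ ≤ ∑ i ∈ range p, ‖g i‖ := fun r => by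
    rw [← hg.map_mod_nat r]
    exact single_le_sum (fun i _ => norm_nonneg (g i))
      (mem_range.2 (Nat.mod_lt r (Nat.pos_of_ne_zero hp)))
  have hg_mean : Tendsto (fun r : ℕ => a + (r : ℝ)⁻¹ * g r) atTop (𝓝 a) := by
    simpa only [add_zero] using
      (tendsto_inv_atTop_nhds_zero_nat.zero_mul_isBoundedUnder_le
        ⟨_, eventually_map.2 (Eventually.of_forall hg_le)⟩).const_add a
  refine hg_mean.congr' ?_
  filter_upwards [eventually_ne_atTop 0] with r hr
  simp only [g]
  field_simp
  ring

theorem tendsto_cesaro_add {e : ℕ → ℝ} (hp : p ≠ 0) (hf : Periodic f p)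
    (he : Tendsto e atTop (𝓝 0)) :
    Tendsto (fun r : ℕ => (r : ℝ)⁻¹ * ∑ n ∈ range r, (f n + e n)) atTop
      (𝓝 ((p : ℝ)⁻¹ * ∑ i ∈ range p, f i)) := by
  simpa [sum_add_distrib, mul_add] using (hf.tendsto_cesaro hp).add he.cesaro

end Function.Periodic

/-- Proposition 3.4 (equality case): for the `Δ`-periodic backward-sampling schedule
`ε j = 1 ↔ Δ ∣ j + 1`, the time-normalized double sum of products `∏ (1 + ε j)⁻¹`
converges to `(3Δ - 1)/2`. -/
theorem adasmooth_prop_delta_eq (Δ : ℕ) (hΔ : 1 ≤ Δ) (ε : ℕ → ℕ)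
    (hε : ∀ j, ε j = if Δ ∣ (j + 1) then 1 else 0) :
    Filter.Tendsto
      (fun r : ℕ =>
        (1 / (r : ℝ)) *
          ∑ m ∈ Finset.range r, ∑ l ∈ Finset.range (m + 1),
            ∏ j ∈ Finset.Icc l m, (1 + (ε j : ℝ))⁻¹)
      Filter.atTop (nhds ((3 * (Δ : ℝ) - 1) / 2)) := by
  have hΔ0 : Δ ≠ 0 := by omega
  set F : ℕ → ℝ := fun n => ((n % Δ : ℕ) : ℝ) + Δ
  have hF : Periodic F Δ := fun n => by simp [F]
  have hinner (m : ℕ) : ∑ l ∈ range (m + 1), ∏ j ∈ Icc l m, (1 + (ε j : ℝ))⁻¹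
      = F (m + 1) + -(Δ * 2⁻¹ ^ ((m + 1) / Δ)) := by
    simp only [← Ico_add_one_right_eq_Icc, sum_range_prod_Ico_inv_one_add_eq_of_periodic hε, F]
    ring
  have hmean : (Δ : ℝ)⁻¹ * ∑ i ∈ range Δ, F (i + 1) = (3 * Δ - 1) / 2 := by
    simp only [add_comm _ 1, hF.sum_range_comp_add, F, sum_add_distrib, sum_const, card_range,
      nsmul_eq_mul]
    rw [sum_congr rfl fun i hi => by rw [Nat.mod_eq_of_lt (mem_range.1 hi)]]
    field_simp
    linear_combination sum_range_natCast_mul_two (R := ℝ) Δ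
  have hdecay : Tendsto (fun m : ℕ => -(Δ * (2⁻¹ : ℝ) ^ ((m + 1) / Δ))) atTop (𝓝 0) := by
    simpa using (((tendsto_pow_atTop_nhds_zero_of_lt_one (r := (2⁻¹ : ℝ)) (by norm_num)
      (by norm_num)).comp ((Nat.tendsto_div_const_atTop hΔ0).comp
        (tendsto_add_atTop_nat 1))).const_mul (Δ : ℝ)).neg
  have h := (hF.add_const 1).tendsto_cesaro_add hΔ0 hdecay
  rw [hmean] at h
  simpa only [one_div, hinner] using h
end

section
/- Let Δ ≥ 1 be an integer and let (ε_j)_{j∈ℕ} be the {0,1}-valued sequence with ε_j = 1 if and only if Δ divides j+1. For each m ∈ ℕ write m = a_m·Δ − 1 + b_m, where a_m := ⌊(m+1)/Δ⌋ and b_m := m + 1 − a_m·Δ. Then for every m ∈ ℕ, Σ_{ℓ=0}^{m} Π_{j=ℓ}^{m} (1+ε_j)^{−1} = Δ·(1 − 2^{−a_m}) + b_m. -/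
open Finset

/-- Key closed-form identity in the proof of Proposition 3.4: for the `Δ`-periodic
schedule `ε j = 1 ↔ Δ ∣ j + 1`, with `a_m = ⌊(m+1)/Δ⌋` and `b_m = m + 1 - a_m Δ`,
`∑_{ℓ=0}^m ∏_{j=ℓ}^m (1+ε_j)⁻¹ = Δ (1 - 2^{-a_m}) + b_m`. -/
theorem adasmooth_inner_sum_closed_form (Δ : ℕ) (hΔ : 1 ≤ Δ) (ε : ℕ → ℕ)
    (hε : ∀ j, ε j = if Δ ∣ (j + 1) then 1 else 0) (m : ℕ) :
    ∑ l ∈ Finset.range (m + 1), ∏ j ∈ Finset.Icc l m, (1 + (ε j : ℝ))⁻¹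
      = (Δ : ℝ) * (1 - (2 : ℝ) ^ (-(((m + 1) / Δ : ℕ) : ℤ)))
        + ((m + 1 - ((m + 1) / Δ) * Δ : ℕ) : ℝ) := by
  induction m with
  | zero =>
      rw [Finset.sum_range_one, Finset.Icc_self, Finset.prod_singleton, hε 0]
      rcases eq_or_lt_of_le hΔ with h1 | h2
      · subst h1
        norm_num
      · have hd : ¬ Δ ∣ (0 + 1) := by
          intro h
          have := Nat.le_of_dvd one_pos h
          omega
        have hdiv : (0 + 1) / Δ = 0 := Nat.div_eq_of_lt h2
        rw [if_neg hd, hdiv]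
        norm_num
  | succ m ih =>
      have key : ∑ l ∈ Finset.range (m + 1 + 1), ∏ j ∈ Finset.Icc l (m + 1),
            (1 + (ε j : ℝ))⁻¹
          = ((∑ l ∈ Finset.range (m + 1), ∏ j ∈ Finset.Icc l m, (1 + (ε j : ℝ))⁻¹) + 1)
              * (1 + (ε (m + 1) : ℝ))⁻¹ := by
        rw [Finset.sum_range_succ]
        have h1 : ∀ l ∈ Finset.range (m + 1),
            ∏ j ∈ Finset.Icc l (m + 1), (1 + (ε j : ℝ))⁻¹
              = (∏ j ∈ Finset.Icc l m, (1 + (ε j : ℝ))⁻¹) * (1 + (ε (m + 1) : ℝ))⁻¹ := by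
          intro l hl
          exact Finset.prod_Icc_succ_top (by simp at hl; omega) _
        rw [Finset.sum_congr rfl h1, ← Finset.sum_mul, Finset.Icc_self,
          Finset.prod_singleton]
        ring
      rw [key, ih, hε (m + 1)]
      by_cases hd : Δ ∣ (m + 1 + 1)
      · obtain ⟨k, hk⟩ := hd
        have hk0 : k ≠ 0 := by rintro rfl; omega
        obtain ⟨k', rfl⟩ : ∃ k', k = k' + 1 := ⟨k - 1, by omega⟩
        have hk2 : m + 1 + 1 = Δ * k' + Δ := by rw [hk]; ring
        have hm1 : m + 1 = Δ * k' + (Δ - 1) := by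
          generalize Δ * k' = P at hk2 ⊢
          omega
        have hdiv : (m + 1) / Δ = k' := by
          rw [hm1, Nat.mul_add_div (by omega), Nat.div_eq_of_lt (by omega)]
          omega
        have hdiv2 : (m + 1 + 1) / Δ = k' + 1 := by
          rw [hk2, Nat.mul_add_div (by omega), Nat.div_self (by omega)]
        have hb : m + 1 - (m + 1) / Δ * Δ = Δ - 1 := by
          rw [hdiv, mul_comm, hm1]
          simp
        have hb2 : m + 1 + 1 - (m + 1 + 1) / Δ * Δ = 0 := by
          rw [hdiv2]
          have : (k' + 1) * Δ = Δ * k' + Δ := by ring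
          rw [this, hk2]
          simp
        rw [hb, hb2, hdiv, hdiv2, if_pos ⟨k' + 1, hk⟩]
        have hz : (2 : ℝ) ^ (-((k' + 1 : ℕ) : ℤ))
            = (2 : ℝ) ^ (-((k' : ℕ) : ℤ)) * 2⁻¹ := by
          push_cast
          rw [neg_add, zpow_add₀ (by norm_num : (2:ℝ) ≠ 0)]
          norm_num
        rw [hz, Nat.cast_sub hΔ]
        push_cast
        ring
      · have hdiv2 : (m + 1 + 1) / Δ = (m + 1) / Δ := by
          rw [Nat.succ_div, if_neg hd]
          omega
        have hle : (m + 1) / Δ * Δ ≤ m + 1 := Nat.div_mul_le_self _ _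
        have hb2 : m + 1 + 1 - (m + 1 + 1) / Δ * Δ
            = (m + 1 - (m + 1) / Δ * Δ) + 1 := by
          rw [hdiv2]
          generalize hP : (m + 1) / Δ * Δ = P at hle ⊢
          omega
        rw [hb2, hdiv2, if_neg hd]
        push_cast
        ring
end
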